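/- arXiv:0912.0309 — 8 statements merged into one kernel-verified Lean document; each statement's English description precedes it below -/
import Mathlib

section
/- Let δ ≥ 1 and n ≥ 2δ + 3 be integers, let N ≥ n, and let π be a permutation of {1,…,N} such that for all i, j ∈ {1,…,n} with |i − j| ≤ δ + 1 one has |π(i) − π(j)| ≤ δ + 1. Then the image π({1,…,n}) is a set of n consecutive integers, i.e., max_{1 ≤ i ≤ n} π(i) − min_{1 ≤ i ≤ n} π(i) = n − 1. -/
/-!
By injectivity, the `δ + 2` values taken by `π` on a window `[i, i + δ + 1] ⊆ [1, n]` lie within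
distance `δ + 1` of each other, so they fill an interval. Consecutive indices share a window, so
the image of `[1, n]` has no gaps (a discrete intermediate value argument); being a gap-free set
of `n` integers, it is an interval of length `n - 1`.
-/

open Set
open scoped Interval

theorem Set.ordConnected_image_Icc_of_uIcc_subset {α : Type*} [LinearOrder α] {f : ℕ → α}
    {a b : ℕ} (hab : a ≤ b) (h : ∀ j ∈ Ico a b, [[f j, f (j + 1)]] ⊆ f '' Icc a b) :
    (f '' Icc a b).OrdConnected := by
  refine ordConnected_of_uIcc_subset_left (x := f a) ?_
  rintro _ ⟨q, ⟨haq, hqb⟩, rfl⟩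
  induction q, haq using Nat.le_induction with
  | base => simpa using mem_image_of_mem f (left_mem_Icc.mpr hab)
  | succ k hak ih =>
    calc [[f a, f (k + 1)]] ⊆ [[f a, f k]] ∪ [[f k, f (k + 1)]] := uIcc_subset_uIcc_union_uIcc
      _ ⊆ f '' Icc a b := union_subset (ih (by omega)) (h k ⟨hak, by omega⟩)

theorem Finset.ordConnected_of_le_add_of_add_one_le_card {s : Finset ℕ} {d : ℕ}
    (hs : ∀ x ∈ s, ∀ y ∈ s, x ≤ y + d) (hcard : d + 1 ≤ s.card) : (s : Set ℕ).OrdConnected := by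
  have hne : s.Nonempty := Finset.card_pos.mp (by omega)
  have hsub : s ⊆ Finset.Icc (s.min' hne) (s.min' hne + d) := fun x hx =>
    Finset.mem_Icc.mpr ⟨s.min'_le x hx, hs x hx _ (s.min'_mem hne)⟩
  rw [Finset.eq_of_subset_of_card_le hsub (by rw [Nat.card_Icc]; omega), Finset.coe_Icc]
  exact ordConnected_Icc

theorem Finset.eq_Icc_min'_max' {α : Type*} [LinearOrder α] [LocallyFiniteOrder α]
    {s : Finset α} (hs : (s : Set α).OrdConnected)
    (hne : s.Nonempty) : s = Finset.Icc (s.min' hne) (s.max' hne) := by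
  refine subset_antisymm (fun x hx => Finset.mem_Icc.mpr ⟨s.min'_le x hx, s.le_max' x hx⟩) ?_
  intro x hx
  exact hs.out (s.min'_mem hne) (s.max'_mem hne) (Finset.mem_Icc.mp hx)

theorem ordConnected_image_Icc_of_injOn_of_abs_sub_le {f : ℕ → ℕ} {a b d : ℕ} (hd : 1 ≤ d)
    (hdab : a + d ≤ b) (hinj : InjOn f (Icc a b))
    (hf : ∀ i ∈ Icc a b, ∀ j ∈ Icc a b, |(i : ℤ) - j| ≤ d → |(f i : ℤ) - f j| ≤ d) :
    (f '' Icc a b).OrdConnected := by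
  have window : ∀ i, a ≤ i → i + d ≤ b → (f '' Icc i (i + d)).OrdConnected := by
    intro i hai hib
    have hsub : Icc i (i + d) ⊆ Icc a b := Icc_subset_Icc hai hib
    have hcard : ((Finset.Icc i (i + d)).image f).card = d + 1 := by
      rw [Finset.card_image_of_injOn (by simpa using hinj.mono hsub), Nat.card_Icc]
      omega
    have hspread : ∀ x ∈ (Finset.Icc i (i + d)).image f, ∀ y ∈ (Finset.Icc i (i + d)).image f,
        x ≤ y + d := by
      simp only [Finset.mem_image, Finset.mem_Icc]
      rintro _ ⟨j, hj, rfl⟩ _ ⟨k, hk, rfl⟩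
      have := abs_le.mp (hf j (hsub hj) k (hsub hk) (abs_le.mpr ⟨by omega, by omega⟩))
      omega
    simpa using Finset.ordConnected_of_le_add_of_add_one_le_card hspread hcard.ge
  refine ordConnected_image_Icc_of_uIcc_subset (by omega) fun j hj => ?_
  obtain ⟨haj, hjb⟩ := hj
  set i := min j (b - d)
  have hsub : Icc i (i + d) ⊆ Icc a b := Icc_subset_Icc (by omega) (by omega)
  calc [[f j, f (j + 1)]] ⊆ f '' Icc i (i + d) :=
        (window i (by omega) (by omega)).uIcc_subset
          (mem_image_of_mem f ⟨by omega, by omega⟩) (mem_image_of_mem f ⟨by omega, by omega⟩)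
    _ ⊆ f '' Icc a b := image_mono hsub

/-- Let `δ ≥ 1` and `n ≥ 2δ + 3`, let `N ≥ n`, and let `π` be a
permutation (bijection onto itself) of `{1,…,N}` such that any two elements of `{1,…,n}`
differing by at most `δ + 1` are sent to values differing by at most `δ + 1`.  Then the
image `π({1,…,n})` is a set of `n` consecutive integers, i.e.
`max_{1 ≤ i ≤ n} π(i) − min_{1 ≤ i ≤ n} π(i) = n − 1`. -/
theorem image_consecutive (δ n N : ℕ) (hn : 2 * δ + 3 ≤ n) (hN : n ≤ N)
    (π : ℕ → ℕ) (hπ : Set.BijOn π (Set.Icc 1 N) (Set.Icc 1 N))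
    (hyp : ∀ i ∈ Set.Icc 1 n, ∀ j ∈ Set.Icc 1 n,
      |(i : ℤ) - (j : ℤ)| ≤ (δ : ℤ) + 1 → |(π i : ℤ) - (π j : ℤ)| ≤ (δ : ℤ) + 1) :
    ((Finset.Icc 1 n).image π).max'
        (Finset.Nonempty.image (Finset.nonempty_Icc.mpr (by omega)) π) -
      ((Finset.Icc 1 n).image π).min'
        (Finset.Nonempty.image (Finset.nonempty_Icc.mpr (by omega)) π) = n - 1 := by
  have hinj : InjOn π (Icc 1 n) := hπ.injOn.mono (Icc_subset_Icc_right hN)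
  have hconn : (((Finset.Icc 1 n).image π : Finset ℕ) : Set ℕ).OrdConnected := by
    rw [Finset.coe_image, Finset.coe_Icc]
    exact ordConnected_image_Icc_of_injOn_of_abs_sub_le (d := δ + 1) (by omega) (by omega) hinj
      (by exact_mod_cast hyp)
  have hcard := congrArg Finset.card (Finset.eq_Icc_min'_max' hconn
    (Finset.Nonempty.image (Finset.nonempty_Icc.mpr (by omega)) π))
  rw [Finset.card_image_of_injOn (by simpa using hinj), Nat.card_Icc, Nat.card_Icc] at hcard
  omega
end

section
/- Let δ ≥ 1 and n ≥ 2δ + 3 be integers, and let σ be a permutation of {1,…,n} such that for all i, j ∈ {1,…,n} with |i − j| ≤ δ + 1 one has |σ(i) − σ(j)| ≤ δ + 1. Then {σ(1), σ(n)} = {1, n}. -/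
/-! Compare neighbourhoods: the points of `{1, …, n}` within distance `r = δ + 1` of `x` are
mapped injectively into those within distance `r` of `σ x`, so the neighbourhood of `σ x` is at
least as large as that of `x`. An endpoint has only `r + 1` such points, an interior point at
least `r + 2` once `n ≥ r + 2`; hence only `1` and `n` can be sent to `1` or `n`. -/

def intervalBall (n r x : ℕ) : Finset ℕ :=
  Finset.Icc (max 1 (x - r)) (min n (x + r))

theorem mem_intervalBall {n r x y : ℕ} :
    y ∈ intervalBall n r x ↔ y ∈ Set.Icc 1 n ∧ |(y : ℤ) - x| ≤ r := by
  simp only [intervalBall, Finset.mem_Icc, Set.mem_Icc, abs_le]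
  omega

theorem card_intervalBall_one (n r : ℕ) : (intervalBall n r 1).card = min n (r + 1) := by
  rw [intervalBall, Nat.card_Icc]
  omega

theorem card_intervalBall_self (n r : ℕ) : (intervalBall n r n).card = min n (r + 1) := by
  rw [intervalBall, Nat.card_Icc]
  omega

theorem le_card_intervalBall {n r x : ℕ} (hr : 0 < r) (hrn : r + 2 ≤ n) (h1 : 1 < x)
    (hn : x < n) : r + 2 ≤ (intervalBall n r x).card := by
  rw [intervalBall, Nat.card_Icc]
  omega

section LocallyLipschitz

variable {n r : ℕ} {σ : ℕ → ℕ}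

theorem card_intervalBall_le_card_intervalBall_apply
    (hmaps : Set.MapsTo σ (Set.Icc 1 n) (Set.Icc 1 n)) (hinj : Set.InjOn σ (Set.Icc 1 n))
    (hσ : ∀ i ∈ Set.Icc 1 n, ∀ j ∈ Set.Icc 1 n,
      |(i : ℤ) - (j : ℤ)| ≤ r → |(σ i : ℤ) - (σ j : ℤ)| ≤ r)
    {x : ℕ} (hx : x ∈ Set.Icc 1 n) :
    (intervalBall n r x).card ≤ (intervalBall n r (σ x)).card := by
  refine Finset.card_le_card_of_injOn σ (fun y hy => ?_) fun a ha b hb =>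
    hinj (mem_intervalBall.1 ha).1 (mem_intervalBall.1 hb).1
  obtain ⟨hyI, hyx⟩ := mem_intervalBall.1 hy
  exact mem_intervalBall.2 ⟨hmaps hyI, hσ y hyI x hx hyx⟩

theorem apply_ne_one_and_ne_of_lt_of_lt
    (hmaps : Set.MapsTo σ (Set.Icc 1 n) (Set.Icc 1 n)) (hinj : Set.InjOn σ (Set.Icc 1 n))
    (hσ : ∀ i ∈ Set.Icc 1 n, ∀ j ∈ Set.Icc 1 n,
      |(i : ℤ) - (j : ℤ)| ≤ r → |(σ i : ℤ) - (σ j : ℤ)| ≤ r)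
    (hr : 0 < r) (hrn : r + 2 ≤ n) {x : ℕ} (h1 : 1 < x) (hn : x < n) :
    σ x ≠ 1 ∧ σ x ≠ n := by
  have hle := card_intervalBall_le_card_intervalBall_apply hmaps hinj hσ
    (x := x) ⟨h1.le, hn.le⟩
  have hlt := le_card_intervalBall hr hrn h1 hn
  constructor <;> intro hx <;> rw [hx] at hle
  · rw [card_intervalBall_one] at hle; omega
  · rw [card_intervalBall_self] at hle; omega

end LocallyLipschitz

theorem endpoints_fixed_general (δ n : ℕ) (hn : 2 * δ + 3 ≤ n)
    (σ : ℕ → ℕ) (hσ : Set.BijOn σ (Set.Icc 1 n) (Set.Icc 1 n))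
    (hyp : ∀ i ∈ Set.Icc 1 n, ∀ j ∈ Set.Icc 1 n,
      |(i : ℤ) - (j : ℤ)| ≤ (δ : ℤ) + 1 → |(σ i : ℤ) - (σ j : ℤ)| ≤ (δ : ℤ) + 1) :
    ({σ 1, σ n} : Set ℕ) = {1, n} := by
  have interior (x : ℕ) : 1 < x → x < n → σ x ≠ 1 ∧ σ x ≠ n :=
    apply_ne_one_and_ne_of_lt_of_lt (r := δ + 1) hσ.mapsTo hσ.injOn (by exact_mod_cast hyp)
      δ.succ_pos (by omega)
  obtain ⟨p, ⟨hp_ge, hp_le⟩, hp1⟩ := hσ.surjOn (show 1 ∈ Set.Icc 1 n from ⟨le_rfl, by omega⟩)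
  obtain ⟨q, ⟨hq_ge, hq_le⟩, hqn⟩ := hσ.surjOn (show n ∈ Set.Icc 1 n from ⟨by omega, le_rfl⟩)
  have hp_end : p = 1 ∨ p = n := by
    by_contra! h
    exact (interior _ (by omega) (by omega)).1 hp1
  have hq_end : q = 1 ∨ q = n := by
    by_contra! h
    exact (interior _ (by omega) (by omega)).2 hqn
  have hpq : p ≠ q := by rintro rfl; omega
  rcases hp_end with rfl | rfl <;> rcases hq_end with rfl | rfl
  · exact absurd rfl hpq
  · rw [hp1, hqn]
  · rw [hp1, hqn, Set.pair_comm]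
  · exact absurd rfl hpq

/-- Let `δ ≥ 1` and `n ≥ 2δ + 3`, and let `σ` be a permutation
(bijection onto itself) of `{1,…,n}` such that any two elements of `{1,…,n}` differing
by at most `δ + 1` are sent to values differing by at most `δ + 1`.
Then `{σ(1), σ(n)} = {1, n}`. -/
theorem endpoints_fixed (δ n : ℕ) (hδ : 1 ≤ δ) (hn : 2 * δ + 3 ≤ n)
    (σ : ℕ → ℕ) (hσ : Set.BijOn σ (Set.Icc 1 n) (Set.Icc 1 n))
    (hyp : ∀ i ∈ Set.Icc 1 n, ∀ j ∈ Set.Icc 1 n,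
      |(i : ℤ) - (j : ℤ)| ≤ (δ : ℤ) + 1 → |(σ i : ℤ) - (σ j : ℤ)| ≤ (δ : ℤ) + 1) :
    ({σ 1, σ n} : Set ℕ) = {1, n} :=
  endpoints_fixed_general δ n hn σ hσ hyp
end

section
/- Let δ ≥ 1 and n ≥ 2δ + 3 be integers, and let σ be a permutation of {1,…,n} such that for all i, j ∈ {1,…,n} with |i − j| ≤ δ + 1 one has |σ(i) − σ(j)| ≤ δ + 1. Then either σ(i) = i for every i ∈ {1,…,δ+1} ∪ {n−δ,…,n}, or σ(i) = n + 1 − i for every i ∈ {1,…,δ+1} ∪ {n−δ,…,n}. -/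
/-!
Put `d = δ + 1`. The hypothesis makes `σ` map every window `[k, k + d]` injectively onto a set
of `d + 1` integers of diameter at most `d`, that is onto a window `[m k, m k + d]`. The windows
starting at `k` and `k + 1` differ exactly by `k` and `k + d + 1`, so their images differ exactly
by `σ k` and `σ (k + d + 1)`: this forces `m (k + 1) = m k ± 1` and determines `σ k` and
`σ (k + d + 1)` from `m`. A change of direction would give `σ (k + 1) = σ (k + d + 1)`, so `m`,
and with it `σ` on `[1, n - d - 1] ∪ [d + 2, n]`, is affine of slope `1` or `-1`. Since
`n ≥ 2d + 1` this set contains the border, and `σ 1, σ n ∈ [1, n]` leave only the identity and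
the reversal.
-/

open Finset

theorem Finset.eq_Icc_min'_of_card_eq {s : Finset ℕ} {d : ℕ} (hs : s.Nonempty)
    (hdiam : ∀ x ∈ s, ∀ y ∈ s, y ≤ x + d) (hcard : #s = d + 1) :
    s = Icc (s.min' hs) (s.min' hs + d) := by
  refine eq_of_subset_of_card_le (fun x hx => mem_Icc.2 ⟨min'_le s x hx, ?_⟩) ?_
  · exact hdiam _ (min'_mem s hs) x hx
  · rw [hcard, Nat.card_Icc]; omega

theorem Finset.Icc_sdiff_Icc_eq_singleton {a b d x : ℕ} (hd : 0 < d)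
    (h : Icc a (a + d) \ Icc b (b + d) = {x}) :
    (b = a + 1 ∧ x = a) ∨ (a = b + 1 ∧ x = a + d) := by
  have key : ∀ y, y ∈ Icc a (a + d) \ Icc b (b + d) ↔ y = x := by simp [h]
  simp only [mem_sdiff, mem_Icc] at key
  have := key x; have := key a; have := key (a + 1); have := key (a + d); have := key (a + d - 1)
  omega

theorem forall_eq_add_or_forall_add_eq {f : ℕ → ℕ} {N : ℕ}
    (hstep : ∀ k < N, f (k + 1) = f k + 1 ∨ f k = f (k + 1) + 1)
    (hturn : ∀ k, k + 2 ≤ N → f (k + 2) ≠ f k) :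
    (∀ k ≤ N, f k = f 0 + k) ∨ (∀ k ≤ N, f k + k = f 0) := by
  induction N with
  | zero => simp
  | succ N ih =>
    have hlast := hstep N N.lt_succ_self
    rcases Nat.eq_zero_or_pos N with rfl | hN
    · rw [zero_add] at hlast
      rcases hlast with hl | hl
      exacts [Or.inl fun k hk => by interval_cases k <;> omega,
        Or.inr fun k hk => by interval_cases k <;> omega]
    · have hturnN : f (N + 1) ≠ f (N - 1) := by
        simpa [show N - 1 + 2 = N + 1 by omega] using hturn (N - 1) (by omega)
      refine (ih (fun k hk => hstep k (by omega)) (fun k hk => hturn k (by omega))).imp ?_ ?_ <;>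
      · intro h k hk
        obtain hk | rfl := Nat.le_add_one_iff.1 hk
        · exact h k hk
        · have := h N le_rfl; have := h (N - 1) (by omega); omega

theorem image_Icc_step {σ : ℕ → ℕ} {k d a b : ℕ} (hd : 0 < d)
    (hinj : Set.InjOn σ (Set.Icc k (k + d + 1)))
    (ha : (Icc k (k + d)).image σ = Icc a (a + d))
    (hb : (Icc (k + 1) (k + 1 + d)).image σ = Icc b (b + d)) :
    (b = a + 1 ∧ σ k = a ∧ σ (k + d + 1) = a + d + 1) ∨
      (a = b + 1 ∧ σ k = a + d ∧ σ (k + d + 1) = b) := by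
  have hunion : Icc k (k + d) ∪ Icc (k + 1) (k + 1 + d) = Icc k (k + d + 1) := by
    ext; simp only [mem_union, mem_Icc]; omega
  have hinj' : Set.InjOn σ ↑(Icc k (k + d) ∪ Icc (k + 1) (k + 1 + d)) := by
    rwa [hunion, coe_Icc]
  have hleft : Icc a (a + d) \ Icc b (b + d) = {σ k} := by
    have hk : (Icc k (k + d) ∪ Icc (k + 1) (k + 1 + d)) \ Icc (k + 1) (k + 1 + d) = {k} := by
      ext; simp only [mem_sdiff, mem_union, mem_Icc, mem_singleton]; omega
    rw [← ha, ← hb, ← union_sdiff_right, ← image_union,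
      ← image_sdiff_of_injOn hinj' subset_union_right, hk, image_singleton]
  have hright : Icc b (b + d) \ Icc a (a + d) = {σ (k + d + 1)} := by
    have hk : (Icc k (k + d) ∪ Icc (k + 1) (k + 1 + d)) \ Icc k (k + d) = {k + d + 1} := by
      ext; simp only [mem_sdiff, mem_union, mem_Icc, mem_singleton]; omega
    rw [← ha, ← hb, ← union_sdiff_left, ← image_union,
      ← image_sdiff_of_injOn hinj' subset_union_left, hk, image_singleton]
  have := Icc_sdiff_Icc_eq_singleton hd hleft
  have := Icc_sdiff_Icc_eq_singleton hd hright
  omega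

def windowMin (σ : ℕ → ℕ) (d k : ℕ) : ℕ :=
  ((Icc k (k + d)).image σ).min' ((nonempty_Icc.2 (Nat.le_add_right k d)).image σ)

section

variable {σ : ℕ → ℕ} {n d : ℕ}

theorem image_Icc_eq_Icc_windowMin (hinj : Set.InjOn σ (Set.Icc 1 n))
    (hyp : ∀ i ∈ Set.Icc 1 n, ∀ j ∈ Set.Icc 1 n, |(i : ℤ) - j| ≤ d → |(σ i : ℤ) - σ j| ≤ d)
    {k : ℕ} (hk : 1 ≤ k) (hkn : k + d ≤ n) :
    (Icc k (k + d)).image σ = Icc (windowMin σ d k) (windowMin σ d k + d) := by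
  have hsub : ↑(Icc k (k + d)) ⊆ Set.Icc 1 n := by
    rw [coe_Icc]; exact Set.Icc_subset_Icc hk hkn
  apply eq_Icc_min'_of_card_eq
  · simp only [forall_mem_image]
    intro i hi j hj
    have := hyp i (hsub hi) j (hsub hj) (by rw [abs_le]; simp only [mem_Icc] at hi hj; omega)
    rw [abs_le] at this
    omega
  · rw [card_image_of_injOn (hinj.mono hsub), Nat.card_Icc]
    omega

theorem windowMin_step (hinj : Set.InjOn σ (Set.Icc 1 n))
    (hyp : ∀ i ∈ Set.Icc 1 n, ∀ j ∈ Set.Icc 1 n, |(i : ℤ) - j| ≤ d → |(σ i : ℤ) - σ j| ≤ d)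
    (hd : 0 < d) {k : ℕ} (hk : 1 ≤ k) (hkn : k + d + 1 ≤ n) :
    (windowMin σ d (k + 1) = windowMin σ d k + 1 ∧ σ k = windowMin σ d k ∧
        σ (k + d + 1) = windowMin σ d k + d + 1) ∨
      (windowMin σ d k = windowMin σ d (k + 1) + 1 ∧ σ k = windowMin σ d k + d ∧
        σ (k + d + 1) = windowMin σ d (k + 1)) :=
  image_Icc_step hd (hinj.mono (Set.Icc_subset_Icc hk hkn))
    (image_Icc_eq_Icc_windowMin hinj hyp hk (by omega))
    (image_Icc_eq_Icc_windowMin hinj hyp (by omega) (by omega))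

theorem windowMin_affine (hinj : Set.InjOn σ (Set.Icc 1 n))
    (hyp : ∀ i ∈ Set.Icc 1 n, ∀ j ∈ Set.Icc 1 n, |(i : ℤ) - j| ≤ d → |(σ i : ℤ) - σ j| ≤ d)
    (hd : 0 < d) :
    (∀ k, k + d + 1 ≤ n → windowMin σ d (k + 1) = windowMin σ d 1 + k) ∨
      (∀ k, k + d + 1 ≤ n → windowMin σ d (k + 1) + k = windowMin σ d 1) := by
  have hstep : ∀ k < n - d - 1, windowMin σ d (k + 1 + 1) = windowMin σ d (k + 1) + 1 ∨
      windowMin σ d (k + 1) = windowMin σ d (k + 1 + 1) + 1 := fun k hk =>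
    (windowMin_step hinj hyp hd (Nat.le_add_left 1 k) (by omega)).imp And.left And.left
  have hturn : ∀ k, k + 2 ≤ n - d - 1 → windowMin σ d (k + 1 + 1 + 1) ≠ windowMin σ d (k + 1) := by
    intro k hk
    have h1 := windowMin_step hinj hyp hd (Nat.le_add_left 1 k) (by omega)
    have h2 := windowMin_step hinj hyp hd (Nat.le_add_left 1 (k + 1)) (by omega)
    have hne : σ (k + 1 + 1) ≠ σ (k + 1 + d + 1) := fun h =>
      absurd (hinj (by simp only [Set.mem_Icc]; omega) (by simp only [Set.mem_Icc]; omega) h)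
        (by omega)
    omega
  obtain h | h := forall_eq_add_or_forall_add_eq (f := fun k => windowMin σ d (k + 1)) hstep hturn
  · exact .inl fun k hk => h k (by omega)
  · exact .inr fun k hk => h k (by omega)

theorem affine_on_border (hinj : Set.InjOn σ (Set.Icc 1 n))
    (hyp : ∀ i ∈ Set.Icc 1 n, ∀ j ∈ Set.Icc 1 n, |(i : ℤ) - j| ≤ d → |(σ i : ℤ) - σ j| ≤ d)
    (hd : 0 < d) (hn : 2 * d + 1 ≤ n) :
    (∀ i ∈ Set.Icc 1 (n - d - 1) ∪ Set.Icc (d + 2) n, σ i = σ 1 + (i - 1)) ∨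
      (∀ i ∈ Set.Icc 1 (n - d - 1) ∪ Set.Icc (d + 2) n, σ i + (i - 1) = σ 1) := by
  have step := fun k (hk : 1 ≤ k) => windowMin_step hinj hyp hd hk (n := n)
  have h1 := step 1 le_rfl (by omega)
  refine (windowMin_affine hinj hyp hd).imp (fun h i hi => ?_) (fun h i hi => ?_) <;>
  · have h1' := h 1 (by omega)
    obtain ⟨k, hk, rfl | rfl⟩ : ∃ k, k + 1 + d + 1 ≤ n ∧ (i = k + 1 ∨ i = k + 1 + d + 1) := by
      rcases hi with ⟨hi1, hin⟩ | ⟨hid, hin⟩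
      exacts [⟨i - 1, by omega, .inl (by omega)⟩, ⟨i - d - 2, by omega, .inr (by omega)⟩]
    all_goals
      have := step (k + 1) (by omega) hk
      have := h k (by omega); have := h (k + 1) (by omega)
      omega

end

theorem border_fixed_or_reversed_general (δ n : ℕ) (hn : 2 * δ + 3 ≤ n)
    (σ : ℕ → ℕ) (hσ : Set.BijOn σ (Set.Icc 1 n) (Set.Icc 1 n))
    (hyp : ∀ i ∈ Set.Icc 1 n, ∀ j ∈ Set.Icc 1 n,
      |(i : ℤ) - (j : ℤ)| ≤ (δ : ℤ) + 1 → |(σ i : ℤ) - (σ j : ℤ)| ≤ (δ : ℤ) + 1) :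
    (∀ i ∈ Set.Icc 1 (δ + 1) ∪ Set.Icc (n - δ) n, σ i = i) ∨
    (∀ i ∈ Set.Icc 1 (δ + 1) ∪ Set.Icc (n - δ) n, σ i = n + 1 - i) := by
  have hyp' : ∀ i ∈ Set.Icc 1 n, ∀ j ∈ Set.Icc 1 n,
      |(i : ℤ) - j| ≤ (δ + 1 : ℕ) → |(σ i : ℤ) - σ j| ≤ (δ + 1 : ℕ) := by
    push_cast; exact hyp
  have hsub : Set.Icc 1 (δ + 1) ∪ Set.Icc (n - δ) n ⊆
      Set.Icc 1 (n - (δ + 1) - 1) ∪ Set.Icc (δ + 1 + 2) n :=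
    Set.union_subset_union (Set.Icc_subset_Icc le_rfl (by omega))
      (Set.Icc_subset_Icc (by omega) le_rfl)
  have hlast : n ∈ Set.Icc 1 (n - (δ + 1) - 1) ∪ Set.Icc (δ + 1 + 2) n :=
    hsub (.inr ⟨by omega, le_rfl⟩)
  have h1 := hσ.mapsTo (x := 1) ⟨le_rfl, by omega⟩
  have hn' := hσ.mapsTo (x := n) ⟨by omega, le_rfl⟩
  simp only [Set.mem_Icc] at h1 hn'
  refine (affine_on_border hσ.injOn hyp' (Nat.succ_pos δ) (by omega)).imp
    (fun h i hi => ?_) (fun h i hi => ?_) <;>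
  · have := h i (hsub hi); have := h n hlast
    have : 1 ≤ i ∧ i ≤ n := by simp only [Set.mem_union, Set.mem_Icc] at hi; omega
    omega

/-- Let `δ ≥ 1` and `n ≥ 2δ + 3`, and let `σ` be a permutation
(bijection onto itself) of `{1,…,n}` such that any two elements of `{1,…,n}` differing
by at most `δ + 1` are sent to values differing by at most `δ + 1`.  Then either
`σ(i) = i` for every `i ∈ {1,…,δ+1} ∪ {n−δ,…,n}`, or `σ(i) = n + 1 − i` for every
`i ∈ {1,…,δ+1} ∪ {n−δ,…,n}`. -/
theorem border_fixed_or_reversed (δ n : ℕ) (hδ : 1 ≤ δ) (hn : 2 * δ + 3 ≤ n)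
    (σ : ℕ → ℕ) (hσ : Set.BijOn σ (Set.Icc 1 n) (Set.Icc 1 n))
    (hyp : ∀ i ∈ Set.Icc 1 n, ∀ j ∈ Set.Icc 1 n,
      |(i : ℤ) - (j : ℤ)| ≤ (δ : ℤ) + 1 → |(σ i : ℤ) - (σ j : ℤ)| ≤ (δ : ℤ) + 1) :
    (∀ i ∈ Set.Icc 1 (δ + 1) ∪ Set.Icc (n - δ) n, σ i = i) ∨
    (∀ i ∈ Set.Icc 1 (δ + 1) ∪ Set.Icc (n - δ) n, σ i = n + 1 - i) :=
  border_fixed_or_reversed_general δ n hn σ hσ hyp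
end

section
/- Let δ ≥ 1 and n ≥ 2δ + 3 be integers, and let σ be a permutation of {1,…,n} such that for all i, j ∈ {1,…,n} with |i − j| ≤ δ + 1 one has |σ(i) − σ(j)| ≤ δ + 1. Then either σ(i) = i for all i ∈ {1,…,n}, or σ(i) = n + 1 − i for all i ∈ {1,…,n}. -/
/-!
Write `d = δ + 1` and `n = N + d`. A window `{j, …, j + d}` with `1 ≤ j ≤ N` has `d + 1`
elements whose images are pairwise at distance at most `d`, so σ maps it onto an interval
`{a j, …, a j + d}`. As σ is injective, `a` is injective, and two consecutive windows differ in
one element only, so `a` moves by at most one at each step. An injective walk with such steps on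
`{1, …, N}` is `j ↦ j` or `j ↦ N + 1 - j`. Finally σ i lies in the image of window `j` exactly
when `i` lies in window `j`, and since `N ≥ d + 1`, a point is determined by the windows
containing it.
-/

open Finset

theorem Finset.exists_eq_Icc_of_card_eq_of_le_add {t : Finset ℕ} {d : ℕ} (hcard : #t = d + 1)
    (hle : ∀ x ∈ t, ∀ y ∈ t, x ≤ y + d) : ∃ a, t = Icc a (a + d) := by
  have ht : t.Nonempty := card_pos.mp (by omega)
  refine ⟨t.min' ht, eq_of_subset_of_card_le (fun x hx => ?_) (by simp [hcard]; omega)⟩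
  exact mem_Icc.mpr ⟨min'_le t x hx, hle x hx _ (min'_mem t ht)⟩

theorem Nat.eq_of_forall_mem_Icc_iff {d N p q : ℕ} (hN : d + 1 ≤ N)
    (hp : p ∈ Set.Icc 1 (N + d)) (hq : q ∈ Set.Icc 1 (N + d))
    (h : ∀ j ∈ Set.Icc 1 N, p ∈ Icc j (j + d) ↔ q ∈ Icc j (j + d)) : p = q := by
  simp only [Set.mem_Icc, mem_Icc] at hp hq h
  -- if `p ≠ q`, one of these windows contains exactly one of them
  have := h p; have := h (p + 1); have := h (p - d)
  have := h q; have := h (q + 1); have := h (q - d)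
  omega

section Steps

variable {f : ℕ → ℕ} {N : ℕ}

theorem add_one_eq_of_injOn_of_step_le (hinj : Set.InjOn f (Set.Icc 1 N))
    (hstep : ∀ i ∈ Set.Icc 1 N, ∀ j ∈ Set.Icc 1 N, j ≤ i + 1 → i ≤ j + 1 → f j ≤ f i + 1)
    (h12 : f 1 ≤ f 2) : ∀ i ∈ Set.Icc 1 N, f i + 1 = f 1 + i := by
  have hne : ∀ i j, 1 ≤ i → i < j → j ≤ N → f i ≠ f j := fun i j hi hij hj h =>
    absurd (hinj ⟨hi, by omega⟩ ⟨by omega, hj⟩ h) (by omega)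
  have key : ∀ i, 1 ≤ i → i + 1 ≤ N → f (i + 1) = f i + 1 ∧ f i + 1 = f 1 + i := by
    intro i hi
    induction i, hi using Nat.le_induction with
    | base =>
      intro hN
      show f 2 = f 1 + 1 ∧ _
      have : f 2 ≤ f 1 + 1 := hstep 1 ⟨le_rfl, by omega⟩ 2 ⟨by omega, hN⟩ (by omega) (by omega)
      have := hne 1 2 le_rfl one_lt_two hN
      omega
    | succ i hi ih =>
      intro hN
      have := ih (by omega)
      have := hstep (i + 1) ⟨by omega, by omega⟩ (i + 1 + 1) ⟨by omega, hN⟩ le_rfl (by omega)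
      have := hstep (i + 1 + 1) ⟨by omega, hN⟩ (i + 1) ⟨by omega, by omega⟩ (by omega) (by omega)
      have := hne i (i + 1 + 1) hi (by omega) hN
      have := hne (i + 1) (i + 1 + 1) (by omega) (by omega) hN
      omega
  rintro (_ | i) ⟨hi, hiN⟩
  · omega
  · rcases Nat.eq_zero_or_pos i with rfl | hi
    · rfl
    · have := key i hi hiN
      omega

theorem eq_self_or_eq_rev_of_injOn_of_step_le (hinj : Set.InjOn f (Set.Icc 1 N))
    (hmaps : Set.MapsTo f (Set.Icc 1 N) (Set.Icc 1 N))
    (hstep : ∀ i ∈ Set.Icc 1 N, ∀ j ∈ Set.Icc 1 N, j ≤ i + 1 → i ≤ j + 1 → f j ≤ f i + 1) :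
    (∀ i ∈ Set.Icc 1 N, f i = i) ∨ (∀ i ∈ Set.Icc 1 N, f i + i = N + 1) := by
  have hbd : ∀ i ∈ Set.Icc 1 N, 1 ≤ f i ∧ f i ≤ N := fun i hi => hmaps hi
  rcases le_total (f 1) (f 2) with h12 | h21
  · left
    have hlin := add_one_eq_of_injOn_of_step_le hinj hstep h12
    intro i hi
    have := hlin i hi
    have := hlin N ⟨hi.1.trans hi.2, le_rfl⟩
    have := hbd 1 ⟨le_rfl, hi.1.trans hi.2⟩
    have := hbd N ⟨hi.1.trans hi.2, le_rfl⟩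
    omega
  · right
    -- the decreasing case is the increasing one for `N + 1 - f`
    have hlin := add_one_eq_of_injOn_of_step_le (f := fun i => N + 1 - f i)
      (fun i hi j hj h => hinj hi hj (by have := hbd i hi; have := hbd j hj; simp only at h; omega))
      (fun i hi j hj hji hij => by
        have := hstep j hj i hi hij hji; have := hbd i hi; have := hbd j hj
        omega)
      (by omega)
    intro i hi
    have := hlin i hi
    have := hlin N ⟨hi.1.trans hi.2, le_rfl⟩
    have := hbd i hi
    have := hbd 1 ⟨le_rfl, hi.1.trans hi.2⟩
    have := hbd N ⟨hi.1.trans hi.2, le_rfl⟩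
    omega

end Steps

section Windows

variable {σ : ℕ → ℕ} {d N : ℕ}

theorem exists_image_Icc_eq_Icc (hinj : Set.InjOn σ (Set.Icc 1 (N + d)))
    (hclose : ∀ p ∈ Set.Icc 1 (N + d), ∀ q ∈ Set.Icc 1 (N + d),
      p ≤ q + d → q ≤ p + d → σ p ≤ σ q + d) :
    ∃ a : ℕ → ℕ, ∀ j ∈ Set.Icc 1 N, (Icc j (j + d)).image σ = Icc (a j) (a j + d) := by
  have (j : ℕ) : ∃ b, j ∈ Set.Icc 1 N → (Icc j (j + d)).image σ = Icc b (b + d) := by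
    by_cases hj : j ∈ Set.Icc 1 N
    · have hsub : ∀ p ∈ Icc j (j + d), p ∈ Set.Icc 1 (N + d) := fun p hp => by
        simp only [Set.mem_Icc, mem_Icc] at hj hp ⊢; omega
      obtain ⟨b, hb⟩ := exists_eq_Icc_of_card_eq_of_le_add (t := (Icc j (j + d)).image σ) (d := d)
        (by rw [card_image_of_injOn (hinj.mono hsub), Nat.card_Icc]; omega)
        (by
          simp only [mem_image, forall_exists_index, and_imp, forall_apply_eq_imp_iff₂]
          intro p hp q hq
          have := mem_Icc.mp hp
          have := mem_Icc.mp hq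
          exact hclose p (hsub p hp) q (hsub q hq) (by omega) (by omega))
      exact ⟨b, fun _ => hb⟩
    · exact ⟨0, fun h => absurd h hj⟩
  choose a ha using this
  exact ⟨a, ha⟩

variable {a : ℕ → ℕ}
  (ha : ∀ j ∈ Set.Icc 1 N, (Icc j (j + d)).image σ = Icc (a j) (a j + d))
include ha

theorem mem_Icc_iff_apply_mem_Icc (hinj : Set.InjOn σ (Set.Icc 1 (N + d))) {j p : ℕ}
    (hj : j ∈ Set.Icc 1 N) (hp : p ∈ Set.Icc 1 (N + d)) :
    σ p ∈ Icc (a j) (a j + d) ↔ p ∈ Icc j (j + d) := by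
  rw [← ha j hj, mem_image]
  refine ⟨fun ⟨q, hq, hqp⟩ => ?_, fun h => ⟨p, h, rfl⟩⟩
  have hq' : q ∈ Set.Icc 1 (N + d) := by
    simp only [Set.mem_Icc, mem_Icc] at hj hq ⊢; omega
  rwa [← hinj hq' hp hqp]

theorem mem_Icc_of_image_Icc_eq_Icc
    (hmaps : Set.MapsTo σ (Set.Icc 1 (N + d)) (Set.Icc 1 (N + d))) {j : ℕ}
    (hj : j ∈ Set.Icc 1 N) : a j ∈ Set.Icc 1 N := by
  have hmem (x : ℕ) (hx : x ∈ Icc (a j) (a j + d)) : x ∈ Set.Icc 1 (N + d) := by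
    obtain ⟨p, hp, rfl⟩ := mem_image.mp ((ha j hj).symm ▸ hx)
    refine hmaps ?_
    simp only [Set.mem_Icc, mem_Icc] at hj hp ⊢; omega
  have h₁ := hmem (a j) (by simp)
  have h₂ := hmem (a j + d) (by simp)
  simp only [Set.mem_Icc] at h₁ h₂ ⊢; omega

theorem injOn_of_image_Icc_eq_Icc (hinj : Set.InjOn σ (Set.Icc 1 (N + d))) :
    Set.InjOn a (Set.Icc 1 N) := by
  intro i hi j hj hij
  have hmem {k l : ℕ} (hk : k ∈ Set.Icc 1 N) (hl : l ∈ Set.Icc 1 N) (hkl : a k = a l) :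
      k ∈ Icc l (l + d) := by
    have hk' : k ∈ Set.Icc 1 (N + d) := by simp only [Set.mem_Icc] at hk ⊢; omega
    rw [← mem_Icc_iff_apply_mem_Icc ha hinj hl hk', ← hkl,
      mem_Icc_iff_apply_mem_Icc ha hinj hk hk']
    simp
  have := hmem hi hj hij
  have := hmem hj hi hij.symm
  simp only [mem_Icc] at *; omega

theorem le_add_one_of_image_Icc_eq_Icc (hd : 0 < d) (hinj : Set.InjOn σ (Set.Icc 1 (N + d)))
    {j k : ℕ} (hj : j ∈ Set.Icc 1 N) (hk : k ∈ Set.Icc 1 N) (hkj : k ≤ j + 1) (hjk : j ≤ k + 1) :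
    a k ≤ a j + 1 := by
  by_contra! hlt
  -- `a j` and `a j + 1` would both have preimages in the one-point set `window j \ window k`
  have hpre (x : ℕ) (hx : x ∈ Icc (a j) (a j + d)) (hxk : x < a k) :
      ∃ p, σ p = x ∧ p ∈ Icc j (j + d) ∧ p ∉ Icc k (k + d) := by
    obtain ⟨p, hpj, rfl⟩ := mem_image.mp ((ha j hj).symm ▸ hx)
    have hp : p ∈ Set.Icc 1 (N + d) := by
      simp only [Set.mem_Icc, mem_Icc] at hj hpj ⊢; omega
    refine ⟨p, rfl, hpj, fun hpk => ?_⟩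
    have := mem_Icc.mp ((mem_Icc_iff_apply_mem_Icc ha hinj hk hp).mpr hpk)
    omega
  obtain ⟨p, hpx, hpj, hpk⟩ := hpre (a j) (by simp) (by omega)
  obtain ⟨q, hqx, hqj, hqk⟩ := hpre (a j + 1) (by simp; omega) hlt
  have : p = q := by simp only [mem_Icc] at hpj hpk hqj hqk; omega
  subst this
  omega

end Windows

theorem identity_or_reversal_general (δ n : ℕ) (hn : 2 * δ + 3 ≤ n)
    (σ : ℕ → ℕ) (hσ : Set.BijOn σ (Set.Icc 1 n) (Set.Icc 1 n))
    (hyp : ∀ i ∈ Set.Icc 1 n, ∀ j ∈ Set.Icc 1 n,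
      |(i : ℤ) - (j : ℤ)| ≤ (δ : ℤ) + 1 → |(σ i : ℤ) - (σ j : ℤ)| ≤ (δ : ℤ) + 1) :
    (∀ i ∈ Set.Icc 1 n, σ i = i) ∨ (∀ i ∈ Set.Icc 1 n, σ i = n + 1 - i) := by
  obtain ⟨N, rfl⟩ : ∃ N, n = N + (δ + 1) := ⟨n - (δ + 1), by omega⟩
  obtain ⟨a, ha⟩ := exists_image_Icc_eq_Icc hσ.injOn fun p hp q hq h₁ h₂ => by
    have := abs_le.mp (hyp p hp q hq (abs_le.mpr ⟨by omega, by omega⟩))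
    omega
  have hsig {i j : ℕ} (hi : i ∈ Set.Icc 1 (N + (δ + 1))) (hj : j ∈ Set.Icc 1 N) :
      σ i ∈ Icc (a j) (a j + (δ + 1)) ↔ i ∈ Icc j (j + (δ + 1)) :=
    mem_Icc_iff_apply_mem_Icc ha hσ.injOn hj hi
  rcases eq_self_or_eq_rev_of_injOn_of_step_le (injOn_of_image_Icc_eq_Icc ha hσ.injOn)
    (fun j hj => mem_Icc_of_image_Icc_eq_Icc ha hσ.mapsTo hj)
    (fun j hj k hk => le_add_one_of_image_Icc_eq_Icc ha δ.succ_pos hσ.injOn hj hk) with h | h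
  · left
    intro i hi
    refine Nat.eq_of_forall_mem_Icc_iff (by omega) (hσ.mapsTo hi) hi fun j hj => ?_
    rw [← hsig hi hj, h j hj]
  · right
    intro i hi
    have hσi : 1 ≤ σ i ∧ σ i ≤ N + (δ + 1) := hσ.mapsTo hi
    suffices N + (δ + 1) + 1 - σ i = i by omega
    refine Nat.eq_of_forall_mem_Icc_iff (by omega) ⟨by omega, by omega⟩ hi fun j hj => ?_
    rw [← hsig hi hj]
    have := h j hj
    simp only [Set.mem_Icc, mem_Icc] at hj ⊢
    omega

/-- Let `δ ≥ 1` and `n ≥ 2δ + 3`, and let `σ` be a permutation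
(bijection onto itself) of `{1,…,n}` such that any two elements of `{1,…,n}` differing
by at most `δ + 1` are sent to values differing by at most `δ + 1`.  Then either
`σ(i) = i` for all `i ∈ {1,…,n}`, or `σ(i) = n + 1 − i` for all `i ∈ {1,…,n}`. -/
theorem identity_or_reversal (δ n : ℕ) (hδ : 1 ≤ δ) (hn : 2 * δ + 3 ≤ n)
    (σ : ℕ → ℕ) (hσ : Set.BijOn σ (Set.Icc 1 n) (Set.Icc 1 n))
    (hyp : ∀ i ∈ Set.Icc 1 n, ∀ j ∈ Set.Icc 1 n,
      |(i : ℤ) - (j : ℤ)| ≤ (δ : ℤ) + 1 → |(σ i : ℤ) - (σ j : ℤ)| ≤ (δ : ℤ) + 1) :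
    (∀ i ∈ Set.Icc 1 n, σ i = i) ∨ (∀ i ∈ Set.Icc 1 n, σ i = n + 1 - i) :=
  identity_or_reversal_general δ n hn σ hσ hyp
end

section
/- Let δ ≥ 1 and n ≥ 2δ + 3 be integers, let N and c be integers with c ≥ 0 and c + n ≤ N, and let π be a permutation of {1,…,N} such that for all i, j ∈ {c+1,…,c+n} with |i − j| ≤ δ + 1 one has |π(i) − π(j)| ≤ δ + 1. Then there exists an integer t with 0 ≤ t and t + n ≤ N such that either π(c + j) = t + j for all j ∈ {1,…,n}, or π(c + j) = t + n + 1 − j for all j ∈ {1,…,n}. -/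
/-!
Write `d = δ + 1` and `f k = π (c + 1 + k)`: `f` is injective on `[0, n)` and sends `d`-close
points to `d`-close values. In a window `{w, …, w + d + 1}` every pair except the two ends is
`d`-close, so `|f (w + d + 1) - f w| ≥ d + 1`: otherwise `d + 2` distinct integers would fit in an
interval holding `d + 1`. Overlapping windows are then oriented alike, so after possibly negating
`f` every window rises. Since `n ≥ 2d + 1`, each step `j → j + 1` is the first step or the last
step of some window, hence `f` is strictly increasing; and a strictly increasing run of length `d`
rising by at most `d` has all its steps equal to one.
-/

open Finset

theorem card_le_succ_of_injOn_of_abs_sub_le {α : Type*} {s : Finset α} {f : α → ℤ} {d : ℕ}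
    (hinj : Set.InjOn f s) (hclose : ∀ x ∈ s, ∀ y ∈ s, |f x - f y| ≤ d) : #s ≤ d + 1 := by
  rcases s.eq_empty_or_nonempty with rfl | hs
  · simp
  obtain ⟨x₀, hx₀, hmin⟩ := s.exists_min_image f hs
  have hsub : s.image f ⊆ Icc (f x₀) (f x₀ + d) := by
    simp only [subset_iff, mem_image, mem_Icc, forall_exists_index, and_imp]
    rintro _ y hy rfl
    exact ⟨hmin y hy, by linarith [(abs_le.mp (hclose y hy x₀ hx₀)).2]⟩
  calc #s = #(s.image f) := (card_image_of_injOn hinj).symm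
    _ ≤ #(Icc (f x₀) (f x₀ + d)) := card_le_card hsub
    _ = d + 1 := by rw [Int.card_Icc]; omega

theorem natCast_sub_le_sub_of_lt_succ {f : ℕ → ℤ} {a b : ℕ} (hab : a ≤ b)
    (hf : ∀ j, a ≤ j → j < b → f j < f (j + 1)) : (b - a : ℤ) ≤ f b - f a := by
  induction b, hab using Nat.le_induction with
  | base => simp
  | succ b hab ih =>
    have := hf b hab (Nat.lt_succ_self b)
    have := ih fun j hj hjb => hf j hj (by omega)
    push_cast
    linarith

namespace BlockRigidity

variable {f : ℕ → ℤ} {n d : ℕ}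

theorem succ_le_abs_sub_window (hinj : Set.InjOn f (Set.Iio n))
    (hf : ∀ i j, i ≤ j → j ≤ i + d → j < n → |f j - f i| ≤ d) {w : ℕ} (hw : w + d + 1 < n) :
    d + 1 ≤ |f (w + d + 1) - f w| := by
  by_contra! hlt
  have close : ∀ x y, w ≤ x → x ≤ y → y ≤ w + d + 1 → |f y - f x| ≤ d := by
    intro x y hwx hxy hy
    by_cases hends : x = w ∧ y = w + d + 1
    · obtain ⟨rfl, rfl⟩ := hends; omega
    · exact hf x y hxy (by omega) (by omega)
  have hcard := card_le_succ_of_injOn_of_abs_sub_le (s := Icc w (w + d + 1)) (d := d)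
    (hinj.mono fun x hx => Set.mem_Iio.2 (by simp only [coe_Icc, Set.mem_Icc] at hx; omega))
    (by
      simp only [mem_Icc]
      rintro x ⟨hx₁, hx₂⟩ y ⟨hy₁, hy₂⟩
      rcases le_total x y with hxy | hyx
      · rw [abs_sub_comm]; exact close x y hx₁ hxy hy₂
      · exact close y x hy₁ hyx hx₂)
  rw [Nat.card_Icc] at hcard
  omega

theorem lt_window_succ (hinj : Set.InjOn f (Set.Iio n))
    (hf : ∀ i j, i ≤ j → j ≤ i + d → j < n → |f j - f i| ≤ d) (hd : 0 < d) {w : ℕ}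
    (hw : w + d + 2 < n) (hlt : f w < f (w + d + 1)) : f (w + 1) < f (w + 1 + d + 1) := by
  -- a falling window at `w + 1` would put `f (w + d + 2)` below `f w`, too far from `f (w + d + 1)`
  have h₀ := succ_le_abs_sub_window hinj hf (w := w) (by omega)
  have h₁ := succ_le_abs_sub_window hinj hf (w := w + 1) (by omega)
  have c₀ := hf w (w + 1) (by omega) (by omega) (by omega)
  have c₁ := hf (w + 1) (w + d + 1) (by omega) (by omega) (by omega)
  have c₂ := hf (w + d + 1) (w + 1 + d + 1) (by omega) (by omega) (by omega)
  rw [abs_le] at c₀ c₁ c₂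
  rw [le_abs'] at h₀ h₁
  omega

theorem lt_window_of_lt_window_zero (hinj : Set.InjOn f (Set.Iio n))
    (hf : ∀ i j, i ≤ j → j ≤ i + d → j < n → |f j - f i| ≤ d) (hd : 0 < d)
    (h₀ : f 0 < f (d + 1)) {w : ℕ} (hw : w + d + 1 < n) : f w < f (w + d + 1) := by
  induction w with
  | zero => simpa using h₀
  | succ w ih => exact lt_window_succ hinj hf hd (by omega) (ih (by omega))

theorem lt_succ_of_lt_window (hinj : Set.InjOn f (Set.Iio n))
    (hf : ∀ i j, i ≤ j → j ≤ i + d → j < n → |f j - f i| ≤ d) {w : ℕ} (hw : w + d + 1 < n)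
    (hlt : f w < f (w + d + 1)) : f w < f (w + 1) ∧ f (w + d) < f (w + d + 1) := by
  have hgap := succ_le_abs_sub_window hinj hf hw
  have c₀ := hf (w + 1) (w + d + 1) (by omega) (by omega) hw
  have c₁ := hf w (w + d) (by omega) (by omega) (by omega)
  rw [abs_of_pos (sub_pos.mpr hlt)] at hgap
  rw [abs_le] at c₀ c₁
  constructor <;> linarith

theorem lt_succ_of_lt_window_zero (hinj : Set.InjOn f (Set.Iio n))
    (hf : ∀ i j, i ≤ j → j ≤ i + d → j < n → |f j - f i| ≤ d) (hd : 0 < d)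
    (hn : 2 * d + 1 ≤ n) (h₀ : f 0 < f (d + 1)) {j : ℕ} (hj : j + 1 < n) : f j < f (j + 1) := by
  -- `j → j + 1` starts the window at `j` or, as `2 * d + 1 ≤ n`, ends the one at `j - d`
  by_cases hfirst : j + d + 1 < n
  · exact (lt_succ_of_lt_window hinj hf hfirst
      (lt_window_of_lt_window_zero hinj hf hd h₀ hfirst)).1
  · obtain ⟨w, rfl⟩ : ∃ w, j = w + d := ⟨j - d, by omega⟩
    have hw : w + d + 1 < n := by omega
    exact (lt_succ_of_lt_window hinj hf hw (lt_window_of_lt_window_zero hinj hf hd h₀ hw)).2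

theorem succ_eq_of_lt_window_zero (hinj : Set.InjOn f (Set.Iio n))
    (hf : ∀ i j, i ≤ j → j ≤ i + d → j < n → |f j - f i| ≤ d) (hd : 0 < d)
    (hn : 2 * d + 1 ≤ n) (h₀ : f 0 < f (d + 1)) {j : ℕ} (hj : j + 1 < n) :
    f (j + 1) = f j + 1 := by
  have hmono : ∀ i, i + 1 < n → f i < f (i + 1) := fun i hi =>
    lt_succ_of_lt_window_zero hinj hf hd hn h₀ hi
  have hstep := hmono j hj
  -- a strictly increasing run of length `d` through the step `j → j + 1` rises by at most `d`
  obtain ⟨a, haj, hja, han⟩ : ∃ a, a ≤ j ∧ j + 1 ≤ a + d ∧ a + d < n :=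
    ⟨min j (n - 1 - d), by omega, by omega, by omega⟩
  have hleft := natCast_sub_le_sub_of_lt_succ (f := f) haj fun i _ hi => hmono i (by omega)
  have hright := natCast_sub_le_sub_of_lt_succ (f := f) hja
    fun i _ hi => hmono i (by omega)
  have hrun := (abs_le.mp (hf a (a + d) (by omega) le_rfl han)).2
  push_cast at hleft hright
  linarith

theorem eq_add_of_lt_window_zero (hinj : Set.InjOn f (Set.Iio n))
    (hf : ∀ i j, i ≤ j → j ≤ i + d → j < n → |f j - f i| ≤ d) (hd : 0 < d)
    (hn : 2 * d + 1 ≤ n) (h₀ : f 0 < f (d + 1)) {j : ℕ} (hj : j < n) : f j = f 0 + j := by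
  induction j with
  | zero => simp
  | succ j ih =>
    rw [succ_eq_of_lt_window_zero hinj hf hd hn h₀ hj, ih (by omega)]
    push_cast
    ring

theorem eq_add_or_eq_sub (hinj : Set.InjOn f (Set.Iio n))
    (hf : ∀ i j, i ≤ j → j ≤ i + d → j < n → |f j - f i| ≤ d) (hd : 0 < d)
    (hn : 2 * d + 1 ≤ n) : (∀ j < n, f j = f 0 + j) ∨ (∀ j < n, f j = f 0 - j) := by
  have hne : f 0 ≠ f (d + 1) := hinj.ne (Set.mem_Iio.2 (by omega)) (Set.mem_Iio.2 (by omega)) (by omega)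
  rcases hne.lt_or_gt with hlt | hgt
  · exact Or.inl fun j hj => eq_add_of_lt_window_zero hinj hf hd hn hlt hj
  · have hinj' : Set.InjOn (-f) (Set.Iio n) := neg_injective.comp_injOn hinj
    have hf' : ∀ i j, i ≤ j → j ≤ i + d → j < n → |(-f) j - (-f) i| ≤ d := fun i j h₁ h₂ h₃ => by
      simpa only [Pi.neg_apply, neg_sub_neg, abs_sub_comm] using hf i j h₁ h₂ h₃
    refine Or.inr fun j hj => ?_
    have := eq_add_of_lt_window_zero hinj' hf' hd hn (by simpa using hgt) hj
    simp only [Pi.neg_apply] at this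
    linarith

end BlockRigidity

theorem block_rigidity_general (δ n N c : ℕ) (hn : 2 * δ + 3 ≤ n)
    (hc : c + n ≤ N)
    (π : ℕ → ℕ) (hπ : Set.BijOn π (Set.Icc 1 N) (Set.Icc 1 N))
    (hyp : ∀ i ∈ Set.Icc (c + 1) (c + n), ∀ j ∈ Set.Icc (c + 1) (c + n),
      |(i : ℤ) - (j : ℤ)| ≤ (δ : ℤ) + 1 → |(π i : ℤ) - (π j : ℤ)| ≤ (δ : ℤ) + 1) :
    ∃ t : ℕ, 0 ≤ t ∧ t + n ≤ N ∧
      ((∀ j ∈ Set.Icc 1 n, π (c + j) = t + j) ∨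
       (∀ j ∈ Set.Icc 1 n, π (c + j) = t + n + 1 - j)) := by
  have hmem : ∀ k < n, c + 1 + k ∈ Set.Icc 1 N := fun k hk => ⟨by omega, by omega⟩
  have hinj : Set.InjOn (fun k => (π (c + 1 + k) : ℤ)) (Set.Iio n) := fun x hx y hy h => by
    have := hπ.injOn (hmem x hx) (hmem y hy) (by simpa using h)
    omega
  have hf : ∀ i j, i ≤ j → j ≤ i + (δ + 1) → j < n →
      |(π (c + 1 + j) : ℤ) - π (c + 1 + i)| ≤ (δ + 1 : ℕ) := fun i j h₁ h₂ h₃ => by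
    push_cast
    exact hyp _ ⟨by omega, by omega⟩ _ ⟨by omega, by omega⟩ (by rw [abs_le]; omega)
  have hshift : ∀ j ∈ Set.Icc 1 n, c + 1 + (j - 1) = c + j := fun j hj => by grind
  have hπ₁ : π (c + 1) ∈ Set.Icc 1 N := hπ.mapsTo ⟨by omega, by omega⟩
  have hπₙ : π (c + n) ∈ Set.Icc 1 N := hπ.mapsTo ⟨by omega, by omega⟩
  rcases BlockRigidity.eq_add_or_eq_sub hinj hf (by omega) (by omega) with h | h
  · have hlin : ∀ j ∈ Set.Icc 1 n, (π (c + j) : ℤ) = π (c + 1) + (j - 1 : ℕ) := fun j hj => by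
      simpa [hshift j hj] using h (j - 1) (by grind)
    refine ⟨π (c + 1) - 1, Nat.zero_le _, ?_, Or.inl fun j hj => ?_⟩
    · have := hlin n ⟨by omega, le_rfl⟩
      grind
    · have := hlin j hj
      grind
  · have hlin : ∀ j ∈ Set.Icc 1 n, (π (c + j) : ℤ) = π (c + 1) - (j - 1 : ℕ) := fun j hj => by
      simpa [hshift j hj] using h (j - 1) (by grind)
    have := hlin n ⟨by omega, le_rfl⟩
    refine ⟨π (c + 1) - n, Nat.zero_le _, by grind, Or.inr fun j hj => ?_⟩
    have := hlin j hj
    grind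

/-- Let `δ ≥ 1` and `n ≥ 2δ + 3`, let `N` and `c` be integers with
`c ≥ 0` and `c + n ≤ N`, and let `π` be a permutation (bijection onto itself) of
`{1,…,N}` such that any two elements of the block `{c+1,…,c+n}` differing by at most
`δ + 1` are sent to values differing by at most `δ + 1`.  Then there is a `t` with
`0 ≤ t` and `t + n ≤ N` such that either `π(c + j) = t + j` for all `j ∈ {1,…,n}`, or
`π(c + j) = t + n + 1 − j` for all `j ∈ {1,…,n}`. -/
theorem block_rigidity (δ n N c : ℕ) (hδ : 1 ≤ δ) (hn : 2 * δ + 3 ≤ n)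
    (hc : c + n ≤ N)
    (π : ℕ → ℕ) (hπ : Set.BijOn π (Set.Icc 1 N) (Set.Icc 1 N))
    (hyp : ∀ i ∈ Set.Icc (c + 1) (c + n), ∀ j ∈ Set.Icc (c + 1) (c + n),
      |(i : ℤ) - (j : ℤ)| ≤ (δ : ℤ) + 1 → |(π i : ℤ) - (π j : ℤ)| ≤ (δ : ℤ) + 1) :
    ∃ t : ℕ, 0 ≤ t ∧ t + n ≤ N ∧
      ((∀ j ∈ Set.Icc 1 n, π (c + j) = t + j) ∨
       (∀ j ∈ Set.Icc 1 n, π (c + j) = t + n + 1 - j)) :=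
  block_rigidity_general δ n N c hn hc π hπ hyp
end

section
/- Let k ≥ 2, δ ≥ 1, and n ≥ 2δ + 3 be integers, let M be a binary matrix with columns indexed by {1,…,N} with N ≥ n, and let c ≥ 0 satisfy c + n ≤ N. Let M′ be the matrix obtained from M by adding, for every pair of columns i, j with c + 1 ≤ i < j ≤ c + n and j − i ≤ δ + 1, a new row whose entries equal 1 exactly in columns i and j. Then for every (k,δ)-consecutive ordering π of M′ there exists an integer t with 0 ≤ t and t + n ≤ N such that either π(c + j) = t + j for all j ∈ {1,…,n}, or π(c + j) = t + n + 1 − j for all j ∈ {1,…,n}. -/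
/-- A binary matrix with columns indexed by `{1,…,N}` is modelled as a set of rows,
each row being a function `ℕ → Bool` (only the values on columns `1,…,N` are relevant).

`numBlocks N w` is the number of blocks of ones of the row `w` on positions `1,…,N`:
a block is a maximal run of consecutive positions carrying a `1`, and we count
block starts (a position `p ∈ {1,…,N}` carrying a `1` such that `p = 1` or
position `p - 1` carries a `0`). -/
def numBlocks (N : ℕ) (w : ℕ → Bool) : ℕ :=
  ((Finset.Icc 1 N).filter (fun p => w p = true ∧ (p = 1 ∨ w (p - 1) = false))).card

/-- `GapsAtMost N δ w` holds when every gap of the row `w` (a maximal run of zeros lying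
between two blocks of ones, within positions `1,…,N`) has size at most `δ`: whenever
positions `p < q` both carry a `1` and all positions strictly between them carry `0`,
the run of zeros between them has length `q - p - 1 ≤ δ`, i.e. `q - p ≤ δ + 1`. -/
def GapsAtMost (N δ : ℕ) (w : ℕ → Bool) : Prop :=
  ∀ p q : ℕ, p ∈ Finset.Icc 1 N → q ∈ Finset.Icc 1 N → p < q →
    w p = true → w q = true → (∀ r : ℕ, p < r → r < q → w r = false) →
    q - p ≤ δ + 1

/-- `IsOrdering N k δ M π` : `π` is a `(k,δ)`-consecutive ordering of the matrix `M`
(with columns `{1,…,N}`): `π` is a permutation of the columns `{1,…,N}` (`π i` is the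
position of column `i` in the permuted matrix, so the entry at position `p` of row `v`
in the permuted matrix is `v (π.symm p)`), and in the permuted matrix every row has at
most `k` blocks and every gap has size at most `δ`. -/
def IsOrdering (N k δ : ℕ) (M : Set (ℕ → Bool)) (π : Equiv.Perm ℕ) : Prop :=
  Set.BijOn π (Set.Icc 1 N) (Set.Icc 1 N) ∧
  ∀ v ∈ M, numBlocks N (fun p => v (π.symm p)) ≤ k ∧
    GapsAtMost N δ (fun p => v (π.symm p))

/-- The rows added by the fixing gadget on the block of columns `{c+1,…,c+n}`:
for every pair of columns `i, j` with `c + 1 ≤ i < j ≤ c + n` and `j − i ≤ δ + 1`,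
a row whose entries equal `1` exactly in columns `i` and `j`. -/
def gadgetRows (c n δ : ℕ) : Set (ℕ → Bool) :=
  {v | ∃ i j : ℕ, c + 1 ≤ i ∧ i < j ∧ j ≤ c + n ∧ j - i ≤ δ + 1 ∧
        v = fun x => decide (x = i ∨ x = j)}


/-!
The gadget rows force any two gadget columns at distance at most `d = δ + 1` to be placed at
distance at most `d`. Hence each window of `d + 1` consecutive gadget columns is placed on an
interval of `d + 1` positions, and since consecutive windows share `d` columns, their intervals are
shifted by one: the column leaving the window sits at the abandoned end and the column entering it
at the new end. A reversal of the direction of the shift would put two columns on the same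
position, so all shifts go the same way and the placement is a translation or a reflection. The
condition `n ≥ 2d + 1` is what pins down the middle column.
-/

open Finset

structure KeepsClose (d n : ℕ) (g : ℕ → ℤ) : Prop where
  injOn : Set.InjOn g (Set.Icc 1 n)
  le_add : ∀ ⦃i⦄, i ∈ Set.Icc 1 n → ∀ ⦃j⦄, j ∈ Set.Icc 1 n → i ≤ j + d → j ≤ i + d →
    g i ≤ g j + d

theorem Int.exists_eq_Icc_of_card_eq {s : Finset ℤ} {d : ℕ} (hcard : #s = d + 1)
    (hdiam : ∀ x ∈ s, ∀ y ∈ s, x ≤ y + d) : ∃ a : ℤ, s = Icc a (a + d) := by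
  have hs : s.Nonempty := card_pos.1 (by omega)
  refine ⟨s.min' hs, eq_of_subset_of_card_le (fun x hx => ?_) ?_⟩
  · exact mem_Icc.2 ⟨s.min'_le x hx, hdiam x hx _ (s.min'_mem hs)⟩
  · rw [hcard, Int.card_Icc]
    omega

namespace KeepsClose

variable {d n : ℕ} {g : ℕ → ℤ}

theorem neg (hg : KeepsClose d n g) : KeepsClose d n fun i => -g i where
  injOn _ hi _ hj h := hg.injOn hi hj (neg_injective h)
  le_add _ hi _ hj hij hji := by
    have := hg.le_add hj hi hji hij
    omega

theorem apply_mem_image_Icc_iff (hg : KeepsClose d n g) {i a b : ℕ} (hi : i ∈ Set.Icc 1 n)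
    (ha : 1 ≤ a) (hb : b ≤ n) : g i ∈ (Icc a b).image g ↔ a ≤ i ∧ i ≤ b := by
  rw [← mem_coe, coe_image, coe_Icc, hg.injOn.mem_image_iff (Set.Icc_subset_Icc ha hb) hi,
    Set.mem_Icc]

theorem card_image_Icc (hg : KeepsClose d n g) {a b : ℕ} (ha : 1 ≤ a) (hb : b ≤ n) :
    #((Icc a b).image g) = b + 1 - a := by
  rw [card_image_of_injOn (coe_Icc a b ▸ hg.injOn.mono (Set.Icc_subset_Icc ha hb)), Nat.card_Icc]

theorem image_window (hg : KeepsClose d n g) {j : ℕ} (hj : 1 ≤ j) (hjn : j + d ≤ n) :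
    ∃ a : ℤ, (Icc j (j + d)).image g = Icc a (a + d) := by
  apply Int.exists_eq_Icc_of_card_eq
  · rw [hg.card_image_Icc hj hjn]
    omega
  · simp only [mem_image, mem_Icc]
    rintro _ ⟨i, hi, rfl⟩ _ ⟨i', hi', rfl⟩
    exact hg.le_add ⟨by omega, by omega⟩ ⟨by omega, by omega⟩ (by omega) (by omega)

theorem window_eq_of_lt (hg : KeepsClose d n g) (hd : 1 ≤ d) {j : ℕ} (hj : 1 ≤ j)
    (hjn : j + d + 1 ≤ n) (hlt : g j < g (j + d + 1)) :
    (Icc j (j + d)).image g = Icc (g j) (g j + d) ∧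
      (Icc (j + 1) (j + d + 1)).image g = Icc (g j + 1) (g j + d + 1) ∧
      g (j + d + 1) = g j + d + 1 := by
  obtain ⟨a, ha⟩ := hg.image_window hj (by omega)
  obtain ⟨b, hb⟩ := hg.image_window (j := j + 1) (by omega) (by omega)
  rw [add_right_comm] at hb
  have hx : g j ∈ Icc a (a + d) := ha ▸ mem_image_of_mem g (mem_Icc.2 ⟨le_rfl, by omega⟩)
  have hy : g (j + d + 1) ∈ Icc b (b + d) :=
    hb ▸ mem_image_of_mem g (mem_Icc.2 ⟨by omega, le_rfl⟩)
  have hx' : g j ∉ Icc b (b + d) := by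
    rw [← hb, hg.apply_mem_image_Icc_iff (i := j) ⟨hj, by omega⟩ (by omega) hjn]
    omega
  have hy' : g (j + d + 1) ∉ Icc a (a + d) := by
    rw [← ha, hg.apply_mem_image_Icc_iff (i := j + d + 1) ⟨by omega, hjn⟩ hj (by omega)]
    omega
  have hmid : (Icc (j + 1) (j + d)).image g ⊆ Icc b (a + d) := by
    intro x hx
    have h1 : x ∈ Icc a (a + d) := ha ▸ image_subset_image (Icc_subset_Icc (by omega) le_rfl) hx
    have h2 : x ∈ Icc b (b + d) := hb ▸ image_subset_image (Icc_subset_Icc le_rfl (by omega)) hx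
    rw [mem_Icc] at h1 h2 ⊢
    exact ⟨h2.1, h1.2⟩
  have hcard := card_le_card hmid
  rw [hg.card_image_Icc (by omega) (by omega), Int.card_Icc] at hcard
  rw [mem_Icc] at hx hy hx' hy'
  obtain ⟨rfl, rfl⟩ : b = g j + 1 ∧ a = g j := by omega
  exact ⟨ha, by rw [hb, add_right_comm], by omega⟩

theorem lt_succ_of_lt (hg : KeepsClose d n g) (hd : 1 ≤ d) {j : ℕ} (hj : 1 ≤ j)
    (hjn : j + 1 + d + 1 ≤ n) (hlt : g j < g (j + d + 1)) : g (j + 1) < g (j + 1 + d + 1) := by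
  obtain ⟨-, hwin, hlast⟩ := hg.window_eq_of_lt hd hj (by omega) hlt
  have hne : g (j + 1) ≠ g (j + 1 + d + 1) := fun h => by
    have := hg.injOn ⟨by omega, by omega⟩ ⟨by omega, hjn⟩ h
    omega
  by_contra! hge
  obtain ⟨-, hwin', -⟩ := hg.neg.window_eq_of_lt hd (j := j + 1) (by omega) hjn
    (neg_lt_neg (hne.symm.lt_of_le hge))
  have h1 : g (j + 1) ∈ Icc (g j + 1) (g j + d + 1) :=
    hwin ▸ mem_image_of_mem g (mem_Icc.2 ⟨le_rfl, by omega⟩)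
  have h2 : -g (j + d + 1) ∈ Icc (-g (j + 1) + 1) (-g (j + 1) + d + 1) :=
    hwin' ▸ mem_image_of_mem (fun i => -g i) (mem_Icc.2 ⟨by omega, by omega⟩)
  rw [mem_Icc] at h1 h2
  omega

theorem lt_of_lt_one (hg : KeepsClose d n g) (hd : 1 ≤ d) (h1 : g 1 < g (1 + d + 1)) :
    ∀ j, 1 ≤ j → j + d + 1 ≤ n → g j < g (j + d + 1) := by
  intro j hj
  induction j, hj using Nat.le_induction with
  | base => exact fun _ => h1
  | succ j hj ih => exact fun hjn => hg.lt_succ_of_lt hd hj hjn (ih (by omega))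

theorem eq_add_of_forall_lt (hg : KeepsClose d n g) (hd : 1 ≤ d)
    (hup : ∀ j, 1 ≤ j → j + d + 1 ≤ n → g j < g (j + d + 1)) :
    ∀ j, 1 ≤ j → j + d + 1 ≤ n → g j = g 1 + j - 1 := by
  intro j hj
  induction j, hj using Nat.le_induction with
  | base => intro _; push_cast; ring
  | succ j hj ih =>
    intro hjn
    obtain ⟨-, hwin, -⟩ := hg.window_eq_of_lt hd hj (by omega) (hup j hj (by omega))
    obtain ⟨hwin', -, -⟩ := hg.window_eq_of_lt hd (by omega) hjn (hup (j + 1) (by omega) hjn)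
    rw [add_right_comm j 1 d, hwin] at hwin'
    have hl : g j + 1 ∈ Icc (g (j + 1)) (g (j + 1) + d) := hwin' ▸ left_mem_Icc.2 (by omega)
    have hr : g (j + 1) ∈ Icc (g j + 1) (g j + d + 1) := hwin'.symm ▸ left_mem_Icc.2 (by omega)
    rw [mem_Icc] at hl hr
    have := ih (by omega)
    push_cast
    omega

theorem eq_add_of_lt (hg : KeepsClose d n g) (hd : 1 ≤ d) (hn : 2 * d + 1 ≤ n)
    (h1 : g 1 < g (1 + d + 1)) : ∀ m, 1 ≤ m → m ≤ n → g m = g 1 + m - 1 := by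
  have up := hg.lt_of_lt_one hd h1
  have head := hg.eq_add_of_forall_lt hd up
  intro m hm hmn
  by_cases hhead : m + d + 1 ≤ n
  · exact head m hm hhead
  by_cases htail : d + 2 ≤ m
  · obtain ⟨j, rfl⟩ : ∃ j, m = j + d + 1 := ⟨m - d - 1, by omega⟩
    rw [(hg.window_eq_of_lt hd (by omega) hmn (up j (by omega) hmn)).2.2,
      head j (by omega) (by omega)]
    push_cast
    ring
  obtain rfl : m = d + 1 := by omega
  obtain ⟨-, hwin, -⟩ := hg.window_eq_of_lt hd le_rfl (by omega) h1
  have hlow : g (d + 1) ∈ Icc (g 1 + 1) (g 1 + d + 1) :=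
    hwin ▸ mem_image_of_mem g (mem_Icc.2 ⟨by omega, by omega⟩)
  have hhigh := hg.le_add (i := d + 1) (j := 1) ⟨by omega, by omega⟩ ⟨le_rfl, by omega⟩
    (by omega) (by omega)
  rw [mem_Icc] at hlow
  obtain ⟨r, hr⟩ : ∃ r : ℕ, g (d + 1) = g 1 + r := ⟨(g (d + 1) - g 1).toNat, by omega⟩
  obtain rfl : r = d := by
    by_contra hrd
    have hr1 := head (r + 1) (by omega) (by omega)
    have := hg.injOn (x₁ := r + 1) (x₂ := d + 1) ⟨by omega, by omega⟩ ⟨by omega, by omega⟩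
      (by push_cast at hr1; omega)
    omega
  rw [hr]
  push_cast
  ring

theorem exists_eq_add_or_eq_sub (hg : KeepsClose d n g) (hd : 1 ≤ d) (hn : 2 * d + 1 ≤ n) :
    ∃ t : ℤ, (∀ m, 1 ≤ m → m ≤ n → g m = t + m) ∨ (∀ m, 1 ≤ m → m ≤ n → g m = t - m) := by
  have hne : g 1 ≠ g (1 + d + 1) := fun h => by
    have := hg.injOn ⟨le_rfl, by omega⟩ ⟨by omega, by omega⟩ h
    omega
  rcases hne.lt_or_gt with h | h
  · refine ⟨g 1 - 1, Or.inl fun m hm hmn => ?_⟩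
    rw [hg.eq_add_of_lt hd hn h m hm hmn]
    ring
  · refine ⟨g 1 + 1, Or.inr fun m hm hmn => ?_⟩
    have := hg.neg.eq_add_of_lt hd hn (neg_lt_neg h) m hm hmn
    linarith

end KeepsClose

theorem GapsAtMost.le_add_of_pair {N δ p q : ℕ}
    (h : GapsAtMost N δ fun r => decide (r = p ∨ r = q)) (hp : p ∈ Icc 1 N) (hq : q ∈ Icc 1 N) :
    q ≤ p + (δ + 1) := by
  rcases le_or_gt q p with hqp | hpq
  · omega
  have := h p q hp hq hpq (by simp) (by simp) fun r hpr hrq => by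
    simp only [decide_eq_false_iff_not]
    omega
  omega

theorem IsOrdering.le_add_of_gadget {N k δ n c : ℕ} {M : Set (ℕ → Bool)} {π : Equiv.Perm ℕ}
    (hc : c + n ≤ N) (hord : IsOrdering N k δ (M ∪ gadgetRows c n δ) π) {i j : ℕ}
    (hi : c + 1 ≤ i) (hij : i < j) (hj : j ≤ c + n) (hji : j - i ≤ δ + 1) :
    π i ≤ π j + (δ + 1) ∧ π j ≤ π i + (δ + 1) := by
  have hrow : (fun x => decide (x = i ∨ x = j)) ∈ M ∪ gadgetRows c n δ :=
    Or.inr ⟨i, j, hi, hij, hj, hji, rfl⟩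
  have hgap := (hord.2 _ hrow).2
  simp only [Equiv.symm_apply_eq] at hgap
  have hπi : π i ∈ Icc 1 N := mem_Icc.2 (hord.1.mapsTo ⟨by omega, by omega⟩)
  have hπj : π j ∈ Icc 1 N := mem_Icc.2 (hord.1.mapsTo ⟨by omega, by omega⟩)
  have hgap' : GapsAtMost N δ fun r => decide (r = π j ∨ r = π i) := by
    simpa only [or_comm] using hgap
  exact ⟨hgap'.le_add_of_pair hπj hπi, hgap.le_add_of_pair hπi hπj⟩

theorem IsOrdering.keepsClose_gadget {N k δ n c : ℕ} {M : Set (ℕ → Bool)} {π : Equiv.Perm ℕ}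
    (hc : c + n ≤ N) (hord : IsOrdering N k δ (M ∪ gadgetRows c n δ) π) :
    KeepsClose (δ + 1) n fun m => (π (c + m) : ℤ) where
  injOn i _ j _ h := by simpa using h
  le_add i hi j hj hij hji := by
    simp only [Set.mem_Icc] at hi hj
    rcases lt_trichotomy i j with h | rfl | h
    · have := hord.le_add_of_gadget hc (i := c + i) (j := c + j) (by omega) (by omega) (by omega)
        (by omega)
      omega
    · omega
    · have := hord.le_add_of_gadget hc (i := c + j) (j := c + i) (by omega) (by omega) (by omega)
        (by omega)
      omega

theorem gadget_forces_block_general (N k δ n c : ℕ)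
    (hn : 2 * δ + 3 ≤ n) (hc : c + n ≤ N)
    (M : Set (ℕ → Bool)) (π : Equiv.Perm ℕ)
    (hord : IsOrdering N k δ (M ∪ gadgetRows c n δ) π) :
    ∃ t : ℕ, 0 ≤ t ∧ t + n ≤ N ∧
      ((∀ j ∈ Set.Icc 1 n, π (c + j) = t + j) ∨
       (∀ j ∈ Set.Icc 1 n, π (c + j) = t + n + 1 - j)) := by
  have hrange : ∀ m, 1 ≤ m → m ≤ n → 1 ≤ π (c + m) ∧ π (c + m) ≤ N := fun m hm hmn =>
    hord.1.mapsTo ⟨by omega, by omega⟩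
  have h1 := hrange 1 le_rfl (by omega)
  have hn' := hrange n (by omega) le_rfl
  obtain ⟨t, ht | ht⟩ := (hord.keepsClose_gadget hc).exists_eq_add_or_eq_sub (by omega) (by omega)
  · have := ht 1 le_rfl (by omega)
    have := ht n (by omega) le_rfl
    lift t to ℕ using by omega
    refine ⟨t, t.zero_le, by omega, Or.inl fun j hj => ?_⟩
    have := ht j hj.1 hj.2
    omega
  · have := ht 1 le_rfl (by omega)
    have := ht n (by omega) le_rfl
    obtain ⟨s, rfl⟩ : ∃ s : ℕ, t = s + n + 1 := ⟨(t - n - 1).toNat, by omega⟩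
    refine ⟨s, s.zero_le, by omega, Or.inr fun j hj => ?_⟩
    have := ht j hj.1 hj.2
    omega

/-- Let `k ≥ 2`, `δ ≥ 1`, and `n ≥ 2δ + 3`, let `M` be a binary matrix
with columns indexed by `{1,…,N}` with `N ≥ n`, and let `c ≥ 0` satisfy `c + n ≤ N`.
Let `M′ = M ∪ gadgetRows c n δ` be the matrix obtained from `M` by adding, for every
pair of columns `i, j` with `c + 1 ≤ i < j ≤ c + n` and `j − i ≤ δ + 1`, a new row whose
entries equal `1` exactly in columns `i` and `j`.  Then for every `(k,δ)`-consecutive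
ordering `π` of `M′` there exists `t` with `0 ≤ t` and `t + n ≤ N` such that either
`π(c + j) = t + j` for all `j ∈ {1,…,n}`, or `π(c + j) = t + n + 1 − j` for all
`j ∈ {1,…,n}`. -/
theorem gadget_forces_block (N k δ n c : ℕ) (hk : 2 ≤ k) (hδ : 1 ≤ δ)
    (hn : 2 * δ + 3 ≤ n) (hN : n ≤ N) (hc : c + n ≤ N)
    (M : Set (ℕ → Bool)) (π : Equiv.Perm ℕ)
    (hord : IsOrdering N k δ (M ∪ gadgetRows c n δ) π) :
    ∃ t : ℕ, 0 ≤ t ∧ t + n ≤ N ∧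
      ((∀ j ∈ Set.Icc 1 n, π (c + j) = t + j) ∨
       (∀ j ∈ Set.Icc 1 n, π (c + j) = t + n + 1 - j)) :=
  gadget_forces_block_general N k δ n c hn hc M π hord
end

section
/- Let k ≥ 2, δ ≥ 1, and n ≥ 2 be integers, let M be a binary matrix with columns indexed by {1,…,N} with N ≥ n, and let c ≥ 0 satisfy c + n ≤ N. Let M′ be the matrix obtained from M by adding, for every pair of columns i, j with c + 1 ≤ i < j ≤ c + n and j − i ≤ δ + 1, a new row whose entries equal 1 exactly in columns i and j. Suppose π is a (k,δ)-consecutive ordering of M and there exists an integer t with 0 ≤ t and t + n ≤ N such that either π(c + j) = t + j for all j ∈ {1,…,n}, or π(c + j) = t + n + 1 − j for all j ∈ {1,…,n}. Then π is a (k,δ)-consecutive ordering of M′. -/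
lemma pairRow_comp_symm (π : Equiv.Perm ℕ) (i j : ℕ) :
    (fun p => decide (π.symm p = i ∨ π.symm p = j)) = fun p => decide (p = π i ∨ p = π j) := by
  simp only [Equiv.symm_apply_eq]

lemma numBlocks_pairRow_le (N a b : ℕ) :
    numBlocks N (fun p => decide (p = a ∨ p = b)) ≤ 2 := by
  calc numBlocks N (fun p => decide (p = a ∨ p = b))
      ≤ ({a, b} : Finset ℕ).card := by
        refine Finset.card_le_card fun p hp => ?_
        simpa using (Finset.mem_filter.1 hp).2.1
    _ ≤ 2 := Finset.card_le_two

lemma gapsAtMost_pairRow {N δ a b : ℕ} (hab : Nat.dist a b ≤ δ + 1) :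
    GapsAtMost N δ (fun p => decide (p = a ∨ p = b)) := by
  intro p q _ _ hpq hp hq _
  simp only [decide_eq_true_eq] at hp hq
  unfold Nat.dist at hab
  omega

lemma dist_apply_eq_of_block {f : ℕ → ℕ} {c n t : ℕ}
    (hf : (∀ j ∈ Set.Icc 1 n, f (c + j) = t + j) ∨
      (∀ j ∈ Set.Icc 1 n, f (c + j) = t + n + 1 - j))
    {i j : ℕ} (hi : i ∈ Set.Icc (c + 1) (c + n)) (hj : j ∈ Set.Icc (c + 1) (c + n)) :
    Nat.dist (f i) (f j) = Nat.dist i j := by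
  have shift : ∀ g : ℕ → ℕ, (∀ j ∈ Set.Icc 1 n, f (c + j) = g j) →
      ∀ x ∈ Set.Icc (c + 1) (c + n), f x = g (x - c) := by
    rintro g hg x ⟨hx₁, hx₂⟩
    simpa [Nat.add_sub_cancel' (by omega : c ≤ x)] using hg (x - c) ⟨by omega, by omega⟩
  obtain ⟨hi₁, hi₂⟩ := hi
  obtain ⟨hj₁, hj₂⟩ := hj
  unfold Nat.dist
  rcases hf with h | h <;> rw [shift _ h i ⟨hi₁, hi₂⟩, shift _ h j ⟨hj₁, hj₂⟩] <;> omega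

theorem gadget_satisfied_by_block_general (N k δ n c : ℕ) (hk : 2 ≤ k)
    (M : Set (ℕ → Bool)) (π : Equiv.Perm ℕ)
    (hord : IsOrdering N k δ M π)
    (hblock : ∃ t : ℕ, 0 ≤ t ∧ t + n ≤ N ∧
      ((∀ j ∈ Set.Icc 1 n, π (c + j) = t + j) ∨
       (∀ j ∈ Set.Icc 1 n, π (c + j) = t + n + 1 - j))) :
    IsOrdering N k δ (M ∪ gadgetRows c n δ) π := by
  obtain ⟨hbij, hM⟩ := hord
  obtain ⟨t, -, -, hcase⟩ := hblock
  refine ⟨hbij, ?_⟩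
  rintro v (hv | ⟨i, j, hi, hij, hj, hd, rfl⟩)
  · exact hM v hv
  rw [pairRow_comp_symm]
  have hdist : Nat.dist (π i) (π j) ≤ δ + 1 := by
    rw [dist_apply_eq_of_block hcase ⟨hi, by omega⟩ ⟨by omega, hj⟩, Nat.dist_eq_sub_of_le hij.le]
    exact hd
  exact ⟨(numBlocks_pairRow_le N _ _).trans hk, gapsAtMost_pairRow hdist⟩

/-- Let `k ≥ 2`, `δ ≥ 1`, and `n ≥ 2`, let `M` be a binary matrix with
columns indexed by `{1,…,N}` with `N ≥ n`, and let `c ≥ 0` satisfy `c + n ≤ N`.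
Let `M′ = M ∪ gadgetRows c n δ` be the matrix obtained from `M` by adding, for every
pair of columns `i, j` with `c + 1 ≤ i < j ≤ c + n` and `j − i ≤ δ + 1`, a new row whose
entries equal `1` exactly in columns `i` and `j`.  Suppose `π` is a `(k,δ)`-consecutive
ordering of `M` and there exists `t` with `0 ≤ t` and `t + n ≤ N` such that either
`π(c + j) = t + j` for all `j ∈ {1,…,n}`, or `π(c + j) = t + n + 1 − j` for all
`j ∈ {1,…,n}`.  Then `π` is a `(k,δ)`-consecutive ordering of `M′`. -/
theorem gadget_satisfied_by_block (N k δ n c : ℕ) (hk : 2 ≤ k) (hδ : 1 ≤ δ)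
    (hn : 2 ≤ n) (hN : n ≤ N) (hc : c + n ≤ N)
    (M : Set (ℕ → Bool)) (π : Equiv.Perm ℕ)
    (hord : IsOrdering N k δ M π)
    (hblock : ∃ t : ℕ, 0 ≤ t ∧ t + n ≤ N ∧
      ((∀ j ∈ Set.Icc 1 n, π (c + j) = t + j) ∨
       (∀ j ∈ Set.Icc 1 n, π (c + j) = t + n + 1 - j))) :
    IsOrdering N k δ (M ∪ gadgetRows c n δ) π :=
  gadget_satisfied_by_block_general N k δ n c hk M π hord hblock
end

section
/- Let δ ≥ 1 be an integer and let M be a binary matrix with columns indexed by {1,…,N} in which every row has exactly two entries equal to 1. Then M has the (2,δ)-C1P if and only if the simple graph G on vertex set {1,…,N}, which has an edge {a, b} whenever some row of M has its two 1-entries in columns a and b, has bandwidth at most δ + 1, i.e., there exists a bijection f : {1,…,N} → {1,…,N} such that |f(a) − f(b)| ≤ δ + 1 for every edge {a, b} of G. -/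
/-!
A row with exactly two ones has at most two blocks whatever the column order, and
its only possible gap lies between its two ones. So a permutation `π` of the columns is a
`(2,δ)`-consecutive ordering exactly when `|π a - π b| ≤ δ + 1` for the two columns `a, b` of
every row, which is the bandwidth condition for `f = π`; conversely a bandwidth layout `f` of
`{1,…,N}` extends to a permutation of `ℕ`.
-/

open Set

theorem Set.BijOn.exists_perm_eqOn {α : Type*} {f : α → α} {s : Set α} (hf : BijOn f s s) :
    ∃ π : Equiv.Perm α, EqOn π f s := by
  classical
  exact ⟨Equiv.Perm.subtypeCongr (hf.equiv f) (Equiv.refl _), fun x hx => by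
    rw [Equiv.Perm.subtypeCongr.left_apply _ _ hx]; rfl⟩

section TwoOnes

variable {N δ A B : ℕ} {w : ℕ → Bool}

theorem numBlocks_le_two_of_ones_eq_pair
    (hw : ∀ p ∈ Icc 1 N, (w p = true ↔ p = A ∨ p = B)) : numBlocks N w ≤ 2 :=
  calc numBlocks N w ≤ ({A, B} : Finset ℕ).card := by
        refine Finset.card_le_card fun p hp => ?_
        rw [Finset.mem_filter, Finset.mem_Icc] at hp
        simpa using (hw p hp.1).mp hp.2.1
    _ ≤ 2 := Finset.card_le_two

theorem gapsAtMost_iff_of_ones_eq_pair (hA : A ∈ Icc 1 N) (hB : B ∈ Icc 1 N)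
    (hw : ∀ p ∈ Icc 1 N, (w p = true ↔ p = A ∨ p = B)) :
    GapsAtMost N δ w ↔ |(A : ℤ) - B| ≤ δ + 1 := by
  simp only [mem_Icc] at hA hB hw
  rw [abs_le]
  constructor
  · intro hgaps
    -- the zeros strictly between the two ones form the single gap of the row
    have gap : ∀ {P Q}, P < Q → (P = A ∧ Q = B ∨ P = B ∧ Q = A) → Q - P ≤ δ + 1 := by
      rintro P Q hPQ hPQ'
      refine hgaps P Q (by simp; omega) (by simp; omega) hPQ
        ((hw P (by omega)).mpr (by omega)) ((hw Q (by omega)).mpr (by omega)) fun r hPr hrQ => ?_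
      by_contra hr
      have := (hw r (by omega)).mp (by simpa using hr)
      omega
    rcases lt_trichotomy A B with h | rfl | h
    · have := gap h (Or.inl ⟨rfl, rfl⟩); omega
    · omega
    · have := gap h (Or.inr ⟨rfl, rfl⟩); omega
  · intro hAB p q hp hq hpq hwp hwq _
    rw [Finset.mem_Icc] at hp hq
    rcases (hw p hp).mp hwp with rfl | rfl <;> rcases (hw q hq).mp hwq with rfl | rfl <;> omega

end TwoOnes

theorem ones_eq_pair_perm {N a b : ℕ} {v : ℕ → Bool} {π : Equiv.Perm ℕ}
    (hπ : BijOn π (Icc 1 N) (Icc 1 N)) (hv : ∀ i ∈ Icc 1 N, (v i = true ↔ i = a ∨ i = b)) :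
    ∀ p ∈ Icc 1 N, (v (π.symm p) = true ↔ p = π a ∨ p = π b) := fun p hp => by
  rw [hv _ (hπ.equiv_symm.mapsTo hp), Equiv.symm_apply_eq, Equiv.symm_apply_eq]

theorem isOrdering_two_iff {N δ : ℕ} {M : Set (ℕ → Bool)} {π : Equiv.Perm ℕ}
    (hrows : ∀ v ∈ M, ∃ a b : ℕ, a ∈ Icc 1 N ∧ b ∈ Icc 1 N ∧ a ≠ b ∧
      ∀ i ∈ Icc 1 N, (v i = true ↔ i = a ∨ i = b))
    (hπ : BijOn π (Icc 1 N) (Icc 1 N)) :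
    IsOrdering N 2 δ M π ↔ ∀ v ∈ M, ∀ a ∈ Icc 1 N, ∀ b ∈ Icc 1 N, a ≠ b →
      (∀ i ∈ Icc 1 N, (v i = true ↔ i = a ∨ i = b)) → |(π a : ℤ) - π b| ≤ δ + 1 := by
  refine ⟨fun hord v hv a ha b hb _ hab => ?_, fun hband => ⟨hπ, fun v hv => ?_⟩⟩
  · exact (gapsAtMost_iff_of_ones_eq_pair (hπ.mapsTo ha) (hπ.mapsTo hb)
      (ones_eq_pair_perm hπ hab)).mp (hord.2 v hv).2
  · obtain ⟨a, b, ha, hb, hne, hab⟩ := hrows v hv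
    have hperm := ones_eq_pair_perm hπ hab
    exact ⟨numBlocks_le_two_of_ones_eq_pair hperm,
      (gapsAtMost_iff_of_ones_eq_pair (hπ.mapsTo ha) (hπ.mapsTo hb) hperm).mpr
        (hband v hv a ha b hb hne hab)⟩

theorem mem_Icc_of_ones_eq_pair {N a b : ℕ} {v : ℕ → Bool}
    (hrow : ∃ a' b', a' ∈ Icc 1 N ∧ b' ∈ Icc 1 N ∧ a' ≠ b' ∧
      ∀ i ∈ Icc 1 N, (v i = true ↔ i = a' ∨ i = b'))
    (hv : ∀ i ∈ Icc 1 N, (v i = true ↔ i = a ∨ i = b)) : a ∈ Icc 1 N ∧ b ∈ Icc 1 N := by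
  obtain ⟨a', b', ha', hb', hne, hv'⟩ := hrow
  have h₁ := (hv a' ha').mp ((hv' a' ha').mpr (Or.inl rfl))
  have h₂ := (hv b' hb').mp ((hv' b' hb').mpr (Or.inr rfl))
  rcases h₁ with rfl | rfl <;> rcases h₂ with rfl | rfl <;> simp_all

theorem two_ones_C1P_iff_bandwidth_general (N δ : ℕ)
    (M : Set (ℕ → Bool))
    (hrows : ∀ v ∈ M, ∃ a b : ℕ, a ∈ Set.Icc 1 N ∧ b ∈ Set.Icc 1 N ∧ a ≠ b ∧
      ∀ i ∈ Set.Icc 1 N, (v i = true ↔ i = a ∨ i = b)) :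
    (∃ π : Equiv.Perm ℕ, IsOrdering N 2 δ M π) ↔
    (∃ f : ℕ → ℕ, Set.BijOn f (Set.Icc 1 N) (Set.Icc 1 N) ∧
      ∀ a b : ℕ, a ≠ b →
        (∃ v ∈ M, ∀ i ∈ Set.Icc 1 N, (v i = true ↔ i = a ∨ i = b)) →
        |(f a : ℤ) - (f b : ℤ)| ≤ (δ : ℤ) + 1) := by
  constructor
  · rintro ⟨π, hord⟩
    refine ⟨π, hord.1, fun a b hab ⟨v, hv, hvab⟩ => ?_⟩
    obtain ⟨ha, hb⟩ := mem_Icc_of_ones_eq_pair (hrows v hv) hvab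
    exact (isOrdering_two_iff hrows hord.1).mp hord v hv a ha b hb hab hvab
  · rintro ⟨f, hf, hband⟩
    obtain ⟨π, hπf⟩ := hf.exists_perm_eqOn
    have hπ : BijOn π (Icc 1 N) (Icc 1 N) := hf.congr hπf.symm
    refine ⟨π, (isOrdering_two_iff hrows hπ).mpr fun v hv a ha b hb hab hvab => ?_⟩
    rw [hπf ha, hπf hb]
    exact hband a b hab ⟨v, hv, hvab⟩

/-- Let `δ ≥ 1` and let `M` be a binary matrix with columns indexed by
`{1,…,N}` in which every row has exactly two entries equal to `1`.  Then `M` has the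
`(2,δ)`-C1P (some permutation of its columns is a `(2,δ)`-consecutive ordering of `M`)
if and only if the simple graph on vertex set `{1,…,N}` having an edge `{a, b}` whenever
some row of `M` has its two `1`-entries in columns `a` and `b` has bandwidth at most
`δ + 1`, i.e. there is a bijection `f` of `{1,…,N}` onto itself with
`|f a − f b| ≤ δ + 1` for every edge `{a, b}`. -/
theorem two_ones_C1P_iff_bandwidth (N δ : ℕ) (hδ : 1 ≤ δ)
    (M : Set (ℕ → Bool))
    (hrows : ∀ v ∈ M, ∃ a b : ℕ, a ∈ Set.Icc 1 N ∧ b ∈ Set.Icc 1 N ∧ a ≠ b ∧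
      ∀ i ∈ Set.Icc 1 N, (v i = true ↔ i = a ∨ i = b)) :
    (∃ π : Equiv.Perm ℕ, IsOrdering N 2 δ M π) ↔
    (∃ f : ℕ → ℕ, Set.BijOn f (Set.Icc 1 N) (Set.Icc 1 N) ∧
      ∀ a b : ℕ, a ≠ b →
        (∃ v ∈ M, ∀ i ∈ Set.Icc 1 N, (v i = true ↔ i = a ∨ i = b)) →
        |(f a : ℤ) - (f b : ℤ)| ≤ (δ : ℤ) + 1) :=
  two_ones_C1P_iff_bandwidth_general N δ M hrows
end
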